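/- (Accuracy of the soft-min MFC fixed point.) Under Assumption (Lip), L_p < |𝒳|c_min, and 0 < φ < φ_max, suppose there is a pair (μ̂, Q̂) with μ̂ = P^{argmin_e Q̂, μ̂}μ̂ and Q̂ = B_{μ̂}Q̂. Let δ > 0 be the action gap of Q̂ and assume φ_max − 1/δ > 0. Then ‖μ*_{Q*φ} − μ̂‖₁ ≤ 2√|𝒜|·(1−γ)·exp(−φδ)/((L_f + (γ/(1−γ))L_p‖f‖∞)(φ_max − φ)) and ‖Q*φ − Q̂‖∞ ≤ 2√|𝒜|·exp(−φδ)/(φ_max − φ), where μ*_Q is the unique fixed point of μ ↦ P^{softmin_φ Q,μ}μ and Q*φ is the unique fixed point of Q ↦ B_{μ*_Q}Q. -/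

import Mathlib

/-!
Write `E = ‖μ*_{Q*φ} − μ̂‖₁` and `e = ‖Q*φ − Q̂‖∞`. Comparing the two Bellman fixed points gives
`(1 − γ) e ≤ (L_f + γ/(1−γ) L_p ‖f‖∞) E`. Comparing the two stationary distributions, the
minorization `p ≥ c_min` makes the transition operator a contraction with factor `1 − |𝒳| c_min`
on zero-sum vectors (Doeblin), so `(|𝒳| c_min − L_p) E` is at most the ℓ¹ distance between the
policies `softmin_φ Q*φ` and `argmin_e Q̂`. That distance is at most `|𝒜| φ e + 2 |𝒜| exp(−φδ)`:
softmin is Lipschitz in the table (mean value theorem), and the action gap leaves at most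
`exp(−φδ)` of softmin mass on each non-minimizing action. By the definition of `φ_max` the two
linear inequalities combine into the stated bounds.
-/

open Finset Filter
open scoped Classical

noncomputable section

variable {X A : Type*}

/-- A probability vector on a finite set. -/
def IsProb [Fintype X] (μ : X → ℝ) : Prop := (∀ x, 0 ≤ μ x) ∧ ∑ x, μ x = 1

/-- ℓ¹ norm of a signed measure / vector on a finite set. -/
def l1 [Fintype X] (μ : X → ℝ) : ℝ := ∑ x, |μ x|

/-- Sup norm of a Q-table. -/
def supQ [Fintype X] [Fintype A] [Nonempty X] [Nonempty A] (Q : X → A → ℝ) : ℝ :=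
  Finset.univ.sup' Finset.univ_nonempty (fun xa : X × A => |Q xa.1 xa.2|)

/-- Minimum of a row of a Q-table (minimum over actions). -/
def minRow [Fintype A] [Nonempty A] (q : A → ℝ) : ℝ :=
  Finset.univ.inf' Finset.univ_nonempty q

/-- The soft-min distribution over actions with parameter φ. -/
def softmin [Fintype A] (φ : ℝ) (z : A → ℝ) (a : A) : ℝ :=
  Real.exp (-φ * z a) / ∑ a', Real.exp (-φ * z a')

/-- The argmin_e policy: uniform over the minimizers, zero elsewhere. -/
def argminE [Fintype A] [Nonempty A] (q : A → ℝ) (a : A) : ℝ :=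
  if q a = minRow q then (1 : ℝ) / (Finset.univ.filter fun a' => q a' = minRow q).card else 0

/-- (P^{π,μ} ν)(x) = ∑_{x'} ν(x') ∑_a π(a|x') p(x|x',a,μ). -/
def Ppush [Fintype X] [Fintype A] (p : X → A → (X → ℝ) → X → ℝ)
    (π : X → A → ℝ) (μ ν : X → ℝ) (x : X) : ℝ :=
  ∑ x', ν x' * ∑ a, π x' a * p x' a μ x

/-- P₂(Q,μ) = P^{softmin_φ Q, μ} μ − μ. -/
def P2 [Fintype X] [Fintype A] (φ : ℝ) (p : X → A → (X → ℝ) → X → ℝ)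
    (Q : X → A → ℝ) (μ : X → ℝ) (x : X) : ℝ :=
  Ppush p (fun x' => softmin φ (Q x')) μ μ x - μ x

/-- The Bellman operator (B_μ Q)(x,a) = f(x,a,μ) + γ ∑_{x'} p(x'|x,a,μ) min_{a'} Q(x',a'). -/
def bell [Fintype X] [Fintype A] [Nonempty A]
    (f : X → A → (X → ℝ) → ℝ) (p : X → A → (X → ℝ) → X → ℝ) (γ : ℝ)
    (μ : X → ℝ) (Q : X → A → ℝ) (x : X) (a : A) : ℝ :=
  f x a μ + γ * ∑ x', p x a μ x' * minRow (Q x')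

/-- T₂(Q,μ) = B_μ Q − Q. -/
def T2 [Fintype X] [Fintype A] [Nonempty A]
    (f : X → A → (X → ℝ) → ℝ) (p : X → A → (X → ℝ) → X → ℝ) (γ : ℝ)
    (Q : X → A → ℝ) (μ : X → ℝ) (x : X) (a : A) : ℝ :=
  bell f p γ μ Q x a - Q x a

section FiniteSums
variable {ι κ : Type*} [Fintype ι] [Fintype κ]

lemma abs_sum_mul_le_sum_abs_mul (v c : ι → ℝ) {C : ℝ} (hc : ∀ i, |c i| ≤ C) :
    |∑ i, v i * c i| ≤ (∑ i, |v i|) * C := by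
  rw [Finset.sum_mul]
  refine (Finset.abs_sum_le_sum_abs _ _).trans (Finset.sum_le_sum fun i _ => ?_)
  rw [abs_mul]
  exact mul_le_mul_of_nonneg_left (hc i) (abs_nonneg _)

lemma IsProb.sum_abs {w : ι → ℝ} (hw : IsProb w) : ∑ i, |w i| = 1 := by
  simpa only [abs_of_nonneg (hw.1 _)] using hw.2

lemma IsProb.abs_sum_mul_le {w : ι → ℝ} (hw : IsProb w) (c : ι → ℝ) {C : ℝ}
    (hc : ∀ i, |c i| ≤ C) : |∑ i, w i * c i| ≤ C := by
  simpa only [hw.sum_abs, one_mul] using abs_sum_mul_le_sum_abs_mul w c hc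

lemma sum_abs_sum_mul_le (w : ι → ℝ) (v : ι → κ → ℝ) :
    ∑ x, |∑ i, w i * v i x| ≤ ∑ i, |w i| * ∑ x, |v i x| := by
  calc ∑ x, |∑ i, w i * v i x| ≤ ∑ x, ∑ i, |w i| * |v i x| :=
        Finset.sum_le_sum fun x _ =>
          (Finset.abs_sum_le_sum_abs _ _).trans_eq (by simp only [abs_mul])
    _ = ∑ i, |w i| * ∑ x, |v i x| := by
        rw [Finset.sum_comm]; simp only [Finset.mul_sum]

lemma IsProb.sum_abs_sum_mul_le {w : ι → ℝ} (hw : IsProb w) (v : ι → κ → ℝ) {C : ℝ}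
    (hv : ∀ i, ∑ x, |v i x| ≤ C) : ∑ x, |∑ i, w i * v i x| ≤ C := by
  refine (_root_.sum_abs_sum_mul_le w v).trans ?_
  calc ∑ i, |w i| * ∑ x, |v i x| ≤ ∑ i, w i * C :=
        Finset.sum_le_sum fun i _ => by
          rw [abs_of_nonneg (hw.1 i)]; exact mul_le_mul_of_nonneg_left (hv i) (hw.1 i)
    _ = C := by rw [← Finset.sum_mul, hw.2, one_mul]

lemma sum_abs_sum_mul_le_of_sum_eq_zero {d : ι → ℝ} (hd : ∑ i, d i = 0) {K : ι → ι → ℝ}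
    {c : ℝ} (hKc : ∀ x i, c ≤ K x i) (hK : ∀ i, ∑ x, K x i = 1) :
    ∑ x, |∑ i, d i * K x i| ≤ (1 - Fintype.card ι * c) * ∑ i, |d i| := by
  have hshift : ∀ x, ∑ i, d i * K x i = ∑ i, d i * (K x i - c) := fun x => by
    simp only [mul_sub, Finset.sum_sub_distrib, ← Finset.sum_mul, hd, zero_mul, sub_zero]
  have hcol : ∀ i, ∑ x, |K x i - c| = 1 - Fintype.card ι * c := fun i => by
    simp only [fun x => abs_of_nonneg (sub_nonneg.2 (hKc x i)), Finset.sum_sub_distrib, hK,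
      Finset.sum_const, Finset.card_univ, nsmul_eq_mul]
  simp only [hshift]
  refine (sum_abs_sum_mul_le d fun i x => K x i - c).trans_eq ?_
  simp only [hcol, ← Finset.sum_mul, mul_comm]

lemma sum_abs_sub_le_of_sub_le {f g : ι → ℝ} (hfg : ∑ i, f i = ∑ i, g i) {c : ℝ}
    (hc : 0 ≤ c) (h : ∀ i, f i - g i ≤ c) :
    ∑ i, |f i - g i| ≤ 2 * Fintype.card ι * c := by
  have hpos : ∀ i, |f i - g i| ≤ 2 * c - (f i - g i) := fun i => by
    rw [abs_le]; constructor <;> linarith [h i]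
  calc ∑ i, |f i - g i| ≤ ∑ i, (2 * c - (f i - g i)) := Finset.sum_le_sum fun i _ => hpos i
    _ = 2 * Fintype.card ι * c := by
        simp only [Finset.sum_sub_distrib, hfg, sub_self, Finset.sum_const, Finset.card_univ,
          nsmul_eq_mul]
        ring

lemma IsProb.eq_one_of_subsingleton [Subsingleton ι] {w : ι → ℝ} (hw : IsProb w) (i : ι) :
    w i = 1 := by
  rw [← hw.2, Fintype.sum_subsingleton _ i]

lemma IsProb.sum_mul_abs_sub_mean_le {σ : ι → ℝ} (hσ : IsProb σ) {Δ : ι → ℝ} {ε : ℝ}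
    (hΔ : ∀ i, |Δ i| ≤ ε) : ∑ i, σ i * |Δ i - ∑ j, σ j * Δ j| ≤ 2 * ε := by
  have hmean := hσ.abs_sum_mul_le Δ hΔ
  calc ∑ i, σ i * |Δ i - ∑ j, σ j * Δ j| ≤ ∑ i, σ i * (2 * ε) :=
        Finset.sum_le_sum fun i _ => mul_le_mul_of_nonneg_left
          ((abs_sub _ _).trans (by linarith [hΔ i])) (hσ.1 i)
    _ = 2 * ε := by rw [← Finset.sum_mul, hσ.2, one_mul]

lemma l1_nonneg (u : ι → ℝ) : 0 ≤ l1 u :=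
  Finset.sum_nonneg fun _ _ => abs_nonneg _

lemma l1_add_le (u v : ι → ℝ) : l1 (fun x => u x + v x) ≤ l1 u + l1 v := by
  unfold l1
  rw [← Finset.sum_add_distrib]
  exact Finset.sum_le_sum fun x _ => abs_add_le _ _

end FiniteSums

section Rows
variable [Fintype A] [Nonempty A]

lemma minRow_le (q : A → ℝ) (a : A) : minRow q ≤ q a :=
  Finset.inf'_le _ (Finset.mem_univ a)

lemma exists_eq_minRow (q : A → ℝ) : ∃ a, q a = minRow q := by
  obtain ⟨a, -, ha⟩ := Finset.exists_mem_eq_inf' Finset.univ_nonempty q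
  exact ⟨a, ha.symm⟩

lemma abs_minRow_le {q : A → ℝ} {C : ℝ} (h : ∀ a, |q a| ≤ C) : |minRow q| ≤ C := by
  obtain ⟨a, ha⟩ := exists_eq_minRow q
  exact ha ▸ h a

lemma abs_minRow_sub_minRow_le {q q' : A → ℝ} {C : ℝ} (h : ∀ a, |q a - q' a| ≤ C) :
    |minRow q - minRow q'| ≤ C := by
  obtain ⟨a, ha⟩ := exists_eq_minRow q
  obtain ⟨a', ha'⟩ := exists_eq_minRow q'
  have h₁ := minRow_le q a'
  have h₂ := minRow_le q' a
  have hqa := abs_le.1 (h a)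
  have hqa' := abs_le.1 (h a')
  rw [abs_le]
  constructor <;> linarith

lemma isProb_softmin (φ : ℝ) (z : A → ℝ) : IsProb (softmin φ z) := by
  have hZ : 0 < ∑ a, Real.exp (-φ * z a) :=
    Finset.sum_pos (fun _ _ => Real.exp_pos _) Finset.univ_nonempty
  refine ⟨fun a => div_nonneg (Real.exp_pos _).le hZ.le, ?_⟩
  simp only [softmin, ← Finset.sum_div, div_self hZ.ne']

lemma isProb_argminE (q : A → ℝ) : IsProb (argminE q) := by
  obtain ⟨a, ha⟩ := exists_eq_minRow q
  have hcard : (0 : ℝ) < (Finset.univ.filter fun a' => q a' = minRow q).card := by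
    exact_mod_cast Finset.card_pos.2 ⟨a, Finset.mem_filter.2 ⟨Finset.mem_univ a, ha⟩⟩
  refine ⟨fun a => ?_, ?_⟩
  · unfold argminE; split <;> positivity
  · unfold argminE
    rw [← Finset.sum_filter, Finset.sum_const, nsmul_eq_mul, mul_one_div, div_self hcard.ne']


end Rows

section Tables
variable [Fintype X] [Fintype A] [Nonempty X] [Nonempty A]

lemma supQ_le_iff {Q : X → A → ℝ} {C : ℝ} : supQ Q ≤ C ↔ ∀ x a, |Q x a| ≤ C := by
  simp only [supQ, Finset.sup'_le_iff, Finset.mem_univ, true_implies, Prod.forall]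

lemma abs_le_supQ (Q : X → A → ℝ) (x : X) (a : A) : |Q x a| ≤ supQ Q :=
  supQ_le_iff.1 le_rfl x a

lemma supQ_nonneg (Q : X → A → ℝ) : 0 ≤ supQ Q :=
  (abs_nonneg _).trans (abs_le_supQ Q (Classical.arbitrary X) (Classical.arbitrary A))

end Tables

section SoftminLipschitz
variable [Fintype A] [Nonempty A]

lemma hasDerivAt_softmin_line (φ : ℝ) (z Δ : A → ℝ) (a : A) (t : ℝ) :
    HasDerivAt (fun t => softmin φ (fun b => z b + t * Δ b) a)
      (-φ * softmin φ (fun b => z b + t * Δ b) a *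
        (Δ a - ∑ b, softmin φ (fun b => z b + t * Δ b) b * Δ b)) t := by
  have hexp : ∀ b, HasDerivAt (fun t => Real.exp (-φ * (z b + t * Δ b)))
      (Real.exp (-φ * (z b + t * Δ b)) * (-φ * Δ b)) t := fun b => by
    have := (((hasDerivAt_id t).mul_const (Δ b)).const_add (z b)).const_mul (-φ)
    simpa using this.exp
  have hZ : 0 < ∑ b, Real.exp (-φ * (z b + t * Δ b)) :=
    Finset.sum_pos (fun _ _ => Real.exp_pos _) Finset.univ_nonempty
  refine ((hexp a).div (HasDerivAt.fun_sum fun b _ => hexp b) hZ.ne').congr_deriv ?_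
  have hsum : ∑ b, Real.exp (-φ * (z b + t * Δ b)) * (-φ * Δ b)
      = -φ * ∑ b, Real.exp (-φ * (z b + t * Δ b)) * Δ b := by
    rw [Finset.mul_sum]; exact Finset.sum_congr rfl fun _ _ => by ring
  simp only [softmin, div_mul_eq_mul_div, ← Finset.sum_div, hsum]
  field_simp
  ring

lemma sum_abs_softmin_sub_softmin_le {φ : ℝ} (hφ : 0 ≤ φ) {z z' : A → ℝ} {ε : ℝ}
    (hε : ∀ a, |z' a - z a| ≤ ε) :
    ∑ a, |softmin φ z' a - softmin φ z a| ≤ 2 * φ * ε := by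
  set Δ := fun b => z' b - z b
  set σ : ℝ → A → ℝ := fun t => softmin φ (fun b => z b + t * Δ b)
  set s : A → ℝ := fun a => SignType.sign (softmin φ z' a - softmin φ z a)
  -- Pairing with the signs of the final differences turns the ℓ¹ distance into `F 1 - F 0` for a
  -- scalar `F`, to which the mean value theorem applies.
  set F : ℝ → ℝ := fun t => ∑ a, σ t a * s a
  have hσ1 : σ 1 = softmin φ z' := by simp only [σ, Δ, one_mul, add_sub_cancel]
  have hσ0 : σ 0 = softmin φ z := by simp only [σ, zero_mul, add_zero]
  have hF1 : F 1 - F 0 = ∑ a, |softmin φ z' a - softmin φ z a| := by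
    simp only [F, hσ1, hσ0, ← Finset.sum_sub_distrib, ← sub_mul, s, self_mul_sign]
  have hs : ∀ a, |s a| ≤ 1 := fun a => by
    rcases lt_trichotomy (softmin φ z' a - softmin φ z a) 0 with h | h | h <;> simp [s, h]
  have hderiv : ∀ t, HasDerivAt F
      (∑ a, -φ * σ t a * (Δ a - ∑ b, σ t b * Δ b) * s a) t := fun t =>
    HasDerivAt.fun_sum fun a _ => (hasDerivAt_softmin_line φ z Δ a t).mul_const (s a)
  have hbound : ∀ t, |∑ a, -φ * σ t a * (Δ a - ∑ b, σ t b * Δ b) * s a| ≤ 2 * φ * ε := by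
    intro t
    have hσt : IsProb (σ t) := isProb_softmin φ _
    refine (abs_sum_mul_le_sum_abs_mul _ s hs).trans ?_
    simp only [abs_mul, abs_neg, abs_of_nonneg hφ, fun a => abs_of_nonneg (hσt.1 a), mul_one,
      mul_assoc, ← Finset.mul_sum]
    linarith [mul_le_mul_of_nonneg_left (hσt.sum_mul_abs_sub_mean_le hε) hφ]
  have hmvt := norm_image_sub_le_of_norm_deriv_le_segment_01'
    (fun t _ => (hderiv t).hasDerivWithinAt) (fun t _ => (hbound t))
  rwa [Real.norm_eq_abs, hF1, abs_of_nonneg (Finset.sum_nonneg fun _ _ => abs_nonneg _)] at hmvt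

end SoftminLipschitz

section Policies
variable [Fintype A] [Nonempty A]

lemma sum_abs_softmin_sub_softmin_le_card_mul {φ : ℝ} (hφ : 0 ≤ φ) {z z' : A → ℝ} {ε : ℝ}
    (hε : ∀ a, |z' a - z a| ≤ ε) :
    ∑ a, |softmin φ z' a - softmin φ z a| ≤ Fintype.card A * φ * ε := by
  have hε0 : 0 ≤ ε := (abs_nonneg _).trans (hε (Classical.arbitrary A))
  rcases subsingleton_or_nontrivial A with hA | hA
  · simp only [(isProb_softmin φ z').eq_one_of_subsingleton,
      (isProb_softmin φ z).eq_one_of_subsingleton, sub_self, abs_zero, Finset.sum_const_zero]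
    positivity
  · have hcard : (2 : ℝ) ≤ Fintype.card A := by exact_mod_cast Fintype.one_lt_card
    nlinarith [sum_abs_softmin_sub_softmin_le hφ hε, mul_nonneg hφ hε0]

lemma softmin_le_exp_neg_mul_sub_minRow (φ : ℝ) (q : A → ℝ) (a : A) :
    softmin φ q a ≤ Real.exp (-φ * (q a - minRow q)) := by
  obtain ⟨a₀, ha₀⟩ := exists_eq_minRow q
  calc softmin φ q a ≤ Real.exp (-φ * q a) / Real.exp (-φ * q a₀) :=
        div_le_div_of_nonneg_left (Real.exp_pos _).le (Real.exp_pos _)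
          (Finset.single_le_sum (fun b _ => (Real.exp_pos (-φ * q b)).le) (Finset.mem_univ a₀))
    _ = Real.exp (-φ * (q a - minRow q)) := by rw [← Real.exp_sub, ha₀]; ring_nf

lemma softmin_le_argminE_of_eq_minRow (φ : ℝ) {q : A → ℝ} {a : A} (ha : q a = minRow q) :
    softmin φ q a ≤ argminE q a := by
  set M := Finset.univ.filter fun b => q b = minRow q
  have hM : (M.card : ℝ) * Real.exp (-φ * minRow q) ≤ ∑ b, Real.exp (-φ * q b) := by
    calc (M.card : ℝ) * Real.exp (-φ * minRow q) = ∑ b ∈ M, Real.exp (-φ * q b) := by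
          rw [Finset.sum_congr rfl fun b hb => by rw [(Finset.mem_filter.1 hb).2],
            Finset.sum_const, nsmul_eq_mul]
      _ ≤ ∑ b, Real.exp (-φ * q b) :=
          Finset.sum_le_sum_of_subset_of_nonneg (Finset.subset_univ M)
            fun b _ _ => (Real.exp_pos _).le
  have hMpos : (0 : ℝ) < M.card := by
    exact_mod_cast Finset.card_pos.2 ⟨a, Finset.mem_filter.2 ⟨Finset.mem_univ a, ha⟩⟩
  rw [argminE, if_pos ha, softmin, ha, div_le_div_iff₀ (by positivity) hMpos]
  linarith

lemma sum_abs_softmin_sub_argminE_le {φ : ℝ} (hφ : 0 ≤ φ) {q : A → ℝ} {δ : ℝ}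
    (hgap : ∀ a, minRow q < q a → minRow q + δ ≤ q a) :
    ∑ a, |softmin φ q a - argminE q a| ≤ 2 * Fintype.card A * Real.exp (-φ * δ) := by
  refine sum_abs_sub_le_of_sub_le ((isProb_softmin φ q).2.trans (isProb_argminE q).2.symm)
    (Real.exp_pos _).le fun a => ?_
  by_cases ha : q a = minRow q
  · linarith [softmin_le_argminE_of_eq_minRow φ ha, Real.exp_pos (-φ * δ)]
  · have hδ : δ ≤ q a - minRow q := by
      linarith [hgap a (lt_of_le_of_ne (minRow_le q a) (Ne.symm ha))]
    rw [argminE, if_neg ha, sub_zero]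
    refine (softmin_le_exp_neg_mul_sub_minRow φ q a).trans (Real.exp_le_exp.2 ?_)
    nlinarith

lemma sum_abs_softmin_sub_argminE_le_of_abs_sub_le {φ : ℝ} (hφ : 0 ≤ φ) {q q' : A → ℝ}
    {δ ε : ℝ} (hgap : ∀ a, minRow q < q a → minRow q + δ ≤ q a)
    (hε : ∀ a, |q' a - q a| ≤ ε) :
    ∑ a, |softmin φ q' a - argminE q a|
      ≤ Fintype.card A * φ * ε + 2 * Fintype.card A * Real.exp (-φ * δ) := by
  calc ∑ a, |softmin φ q' a - argminE q a|
      ≤ ∑ a, (|softmin φ q' a - softmin φ q a| + |softmin φ q a - argminE q a|) :=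
        Finset.sum_le_sum fun a _ => abs_sub_le _ _ _
    _ ≤ _ := by
        rw [Finset.sum_add_distrib]
        exact add_le_add (sum_abs_softmin_sub_softmin_le_card_mul hφ hε)
          (sum_abs_softmin_sub_argminE_le hφ hgap)

end Policies

section Stationary
variable [Fintype X] [Fintype A] {p : X → A → (X → ℝ) → X → ℝ}

lemma Ppush_sub_Ppush_right (p : X → A → (X → ℝ) → X → ℝ) (π : X → A → ℝ) (μ ν ν' : X → ℝ)
    (x : X) : Ppush p π μ ν x - Ppush p π μ ν' x = Ppush p π μ (fun y => ν y - ν' y) x := by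
  simp only [Ppush, ← Finset.sum_sub_distrib, sub_mul]

lemma l1_Ppush_le_of_sum_eq_zero {π : X → A → ℝ} (hπ : ∀ x, IsProb (π x)) {μ : X → ℝ}
    (hp : ∀ x a, ∑ x', p x a μ x' = 1) {c : ℝ} (hc : ∀ x a x', c ≤ p x a μ x')
    {d : X → ℝ} (hd : ∑ x, d x = 0) :
    l1 (Ppush p π μ d) ≤ (1 - Fintype.card X * c) * l1 d := by
  refine sum_abs_sum_mul_le_of_sum_eq_zero hd (K := fun x x' => ∑ a, π x' a * p x' a μ x)
    (fun x x' => ?_) (fun x' => ?_)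
  · calc c = ∑ a, π x' a * c := by rw [← Finset.sum_mul, (hπ x').2, one_mul]
      _ ≤ ∑ a, π x' a * p x' a μ x :=
          Finset.sum_le_sum fun a _ => mul_le_mul_of_nonneg_left (hc x' a x) ((hπ x').1 a)
  · simp only [Finset.sum_comm (γ := X), ← Finset.mul_sum, hp, mul_one, (hπ x').2]

lemma l1_Ppush_sub_Ppush_le_of_kernel {π : X → A → ℝ} (hπ : ∀ x, IsProb (π x))
    {μ μ' ν : X → ℝ} (hν : IsProb ν) {C : ℝ}
    (hpC : ∀ x a, ∑ x', |p x a μ x' - p x a μ' x'| ≤ C) :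
    l1 (fun x => Ppush p π μ ν x - Ppush p π μ' ν x) ≤ C := by
  have hsplit : ∀ x, Ppush p π μ ν x - Ppush p π μ' ν x
      = ∑ x', ν x' * ∑ a, π x' a * (p x' a μ x - p x' a μ' x) := fun x => by
    simp only [Ppush, ← Finset.sum_sub_distrib, ← mul_sub]
  simp only [l1, hsplit]
  exact hν.sum_abs_sum_mul_le _ fun x' => (hπ x').sum_abs_sum_mul_le _ fun a => hpC x' a

lemma l1_Ppush_sub_Ppush_le_of_policy {π π' : X → A → ℝ} {μ ν : X → ℝ}
    (hp : ∀ x a, IsProb (p x a μ)) (hν : IsProb ν) {B : ℝ}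
    (hB : ∀ x, ∑ a, |π x a - π' x a| ≤ B) :
    l1 (fun x => Ppush p π μ ν x - Ppush p π' μ ν x) ≤ B := by
  have hsplit : ∀ x, Ppush p π μ ν x - Ppush p π' μ ν x
      = ∑ x', ν x' * ∑ a, (π x' a - π' x' a) * p x' a μ x := fun x => by
    simp only [Ppush, ← Finset.sum_sub_distrib, ← mul_sub, sub_mul]
  simp only [l1, hsplit]
  refine hν.sum_abs_sum_mul_le _ fun x' => (sum_abs_sum_mul_le _ _).trans ?_
  simpa only [(hp x' _).sum_abs, mul_one] using hB x'

lemma mul_l1_sub_le_of_stationary {π π' : X → A → ℝ} (hπ : ∀ x, IsProb (π x))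
    {ν μ : X → ℝ} (hν : IsProb ν) (hμ : IsProb μ)
    (hpν : ∀ x a, ∑ x', p x a ν x' = 1) {c : ℝ} (hc : ∀ x a x', c ≤ p x a ν x')
    (hpμ : ∀ x a, IsProb (p x a μ)) {L : ℝ}
    (hL : ∀ x a, ∑ x', |p x a ν x' - p x a μ x'| ≤ L * l1 (fun y => ν y - μ y))
    (hνfix : Ppush p π ν ν = ν) (hμfix : Ppush p π' μ μ = μ) {B : ℝ}
    (hB : ∀ x, ∑ a, |π x a - π' x a| ≤ B) :
    (Fintype.card X * c - L) * l1 (fun y => ν y - μ y) ≤ B := by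
  have hdecomp : (fun x => ν x - μ x) = fun x => Ppush p π ν (fun y => ν y - μ y) x
      + ((Ppush p π ν μ x - Ppush p π μ μ x) + (Ppush p π μ μ x - Ppush p π' μ μ x)) := by
    funext x
    have h₁ := congrFun hνfix x
    have h₂ := congrFun hμfix x
    rw [← Ppush_sub_Ppush_right]
    linarith
  have hd : ∑ x, (ν x - μ x) = 0 := by rw [Finset.sum_sub_distrib, hν.2, hμ.2, sub_self]
  have hE : l1 (fun y => ν y - μ y) ≤ (1 - Fintype.card X * c) * l1 (fun y => ν y - μ y)
      + (L * l1 (fun y => ν y - μ y) + B) := by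
    calc l1 (fun y => ν y - μ y) ≤ _ := (congrArg l1 hdecomp).trans_le (l1_add_le _ _)
      _ ≤ _ := add_le_add (l1_Ppush_le_of_sum_eq_zero hπ hpν hc hd)
          ((l1_add_le _ _).trans (add_le_add (l1_Ppush_sub_Ppush_le_of_kernel hπ hμ hL)
            (l1_Ppush_sub_Ppush_le_of_policy hpμ hμ hB)))
  linarith

end Stationary

section Bellman
variable [Fintype X] [Fintype A] [Nonempty X] [Nonempty A]
  {f : X → A → (X → ℝ) → ℝ} {p : X → A → (X → ℝ) → X → ℝ} {γ : ℝ}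

lemma supQ_le_of_bell_eq_self (hγ0 : 0 ≤ γ) (hγ1 : γ < 1) {μ : X → ℝ} {C : ℝ}
    (hf : ∀ x a, |f x a μ| ≤ C) (hp : ∀ x a, IsProb (p x a μ)) {Q : X → A → ℝ}
    (hQ : bell f p γ μ Q = Q) : supQ Q ≤ C / (1 - γ) := by
  have key : supQ Q ≤ C + γ * supQ Q := supQ_le_iff.2 fun x a => by
    have hcont := (hp x a).abs_sum_mul_le (fun x' => minRow (Q x'))
      fun x' => abs_minRow_le fun a' => abs_le_supQ Q x' a'
    rw [← congrFun (congrFun hQ x) a, bell]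
    calc |f x a μ + γ * ∑ x', p x a μ x' * minRow (Q x')|
        ≤ |f x a μ| + γ * |∑ x', p x a μ x' * minRow (Q x')| :=
          (abs_add_le _ _).trans_eq (by rw [abs_mul, abs_of_nonneg hγ0])
      _ ≤ C + γ * supQ Q := add_le_add (hf x a) (mul_le_mul_of_nonneg_left hcont hγ0)
  rw [le_div_iff₀ (by linarith)]
  linarith

lemma one_sub_mul_supQ_sub_le_of_bell_eq_self (hγ0 : 0 ≤ γ) {ν μ : X → ℝ}
    (hp : ∀ x a, IsProb (p x a ν)) {Lf Lp : ℝ}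
    (hLf : ∀ x a, |f x a ν - f x a μ| ≤ Lf * l1 (fun y => ν y - μ y))
    (hLp : ∀ x a, ∑ x', |p x a ν x' - p x a μ x'| ≤ Lp * l1 (fun y => ν y - μ y))
    {Q Q' : X → A → ℝ} (hQ : bell f p γ ν Q = Q) (hQ' : bell f p γ μ Q' = Q') {C : ℝ}
    (hQ'C : supQ Q' ≤ C / (1 - γ)) :
    (1 - γ) * supQ (fun x a => Q x a - Q' x a)
      ≤ (Lf + γ / (1 - γ) * Lp * C) * l1 (fun y => ν y - μ y) := by
  set E := l1 (fun y => ν y - μ y)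
  set dQ := supQ (fun x a => Q x a - Q' x a)
  have hC : 0 ≤ C / (1 - γ) := (supQ_nonneg Q').trans hQ'C
  have key : dQ ≤ Lf * E + γ * dQ + γ * (Lp * E * (C / (1 - γ))) := supQ_le_iff.2 fun x a => by
    have hsplit : Q x a - Q' x a = (f x a ν - f x a μ)
        + γ * ∑ x', p x a ν x' * (minRow (Q x') - minRow (Q' x'))
        + γ * ∑ x', (p x a ν x' - p x a μ x') * minRow (Q' x') := by
      rw [← congrFun (congrFun hQ x) a, ← congrFun (congrFun hQ' x) a, bell, bell]
      simp only [mul_sub, sub_mul, Finset.sum_sub_distrib]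
      ring
    have hcont : |∑ x', p x a ν x' * (minRow (Q x') - minRow (Q' x'))| ≤ dQ :=
      (hp x a).abs_sum_mul_le _ fun x' =>
        abs_minRow_sub_minRow_le fun a' => abs_le_supQ (fun x a => Q x a - Q' x a) x' a'
    have hpop : |∑ x', (p x a ν x' - p x a μ x') * minRow (Q' x')|
        ≤ Lp * E * (C / (1 - γ)) :=
      (abs_sum_mul_le_sum_abs_mul _ _ fun x' =>
        (abs_minRow_le fun a' => abs_le_supQ Q' x' a').trans hQ'C).trans
        (mul_le_mul_of_nonneg_right (hLp x a) hC)
    rw [hsplit]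
    refine (abs_add_le _ _).trans (add_le_add ((abs_add_le _ _).trans
      (add_le_add (hLf x a) ?_)) ?_) <;> rw [abs_mul, abs_of_nonneg hγ0] <;> gcongr
  have hring : γ * (Lp * E * (C / (1 - γ))) = γ / (1 - γ) * Lp * C * E := by ring
  linarith

end Bellman

lemma error_bounds_of_coupled_estimates {n c D γ φ φmax E dQ ε : ℝ} (hn : 1 ≤ n) (hc : 0 < c)
    (hγ1 : γ < 1) (hφ : 0 < φ) (hφmax : φmax = c / n * ((1 - γ) / D)) (hlt : φ < φmax)
    (hε : 0 ≤ ε) (hE : 0 ≤ E) (hμ : c * E ≤ n * φ * dQ + 2 * n * ε)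
    (hQ : (1 - γ) * dQ ≤ D * E) :
    E ≤ 2 * √n * (1 - γ) * ε / (D * (φmax - φ)) ∧ dQ ≤ 2 * √n * ε / (φmax - φ) := by
  have hγ : 0 < 1 - γ := by linarith
  have hgap : 0 < φmax - φ := by linarith
  have hD : 0 < D := by
    by_contra! hD
    have : φmax ≤ 0 := hφmax ▸ mul_nonpos_of_nonneg_of_nonpos
      (div_nonneg hc.le (by linarith)) (div_nonpos_of_nonneg_of_nonpos hγ.le hD)
    linarith
  have hcD : c * (1 - γ) = n * φmax * D := by rw [hφmax]; field_simp
  have hmain : D * E * (φmax - φ) ≤ 2 * (1 - γ) * ε := by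
    have h₁ := mul_le_mul_of_nonneg_left hμ hγ.le
    have h₂ := mul_le_mul_of_nonneg_left hQ (by positivity : 0 ≤ n * φ)
    have h₃ : n * (D * E * (φmax - φ)) ≤ n * (2 * (1 - γ) * ε) := by nlinarith
    exact le_of_mul_le_mul_left h₃ (by linarith)
  have hs : 1 ≤ √n := Real.one_le_sqrt.2 hn
  constructor
  · rw [le_div_iff₀ (mul_pos hD hgap)]
    nlinarith [mul_nonneg hγ.le hε]
  · rw [le_div_iff₀ hgap]
    have h₄ : (1 - γ) * (dQ * (φmax - φ)) ≤ (1 - γ) * (2 * ε) := by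
      nlinarith [mul_le_mul_of_nonneg_right hQ hgap.le]
    nlinarith [le_of_mul_le_mul_left h₄ hγ]

theorem mfc_accuracy_general [Fintype X] [Fintype A] [Nonempty X] [Nonempty A]
    (γ : ℝ) (hγ0 : 0 < γ) (hγ1 : γ < 1)
    (f : X → A → (X → ℝ) → ℝ) (fnorm : ℝ)
    (hf : ∀ x a μ, IsProb μ → |f x a μ| ≤ fnorm)
    (p : X → A → (X → ℝ) → X → ℝ)
    (hp0 : ∀ x a μ x', IsProb μ → 0 ≤ p x a μ x')
    (hp1 : ∀ x a μ, IsProb μ → ∑ x', p x a μ x' = 1)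
    (cmin Lf Lp : ℝ)
    (hcmin : ∀ x a μ x', IsProb μ → cmin ≤ p x a μ x')
    (hLf : ∀ x a μ μ', IsProb μ → IsProb μ' →
      |f x a μ - f x a μ'| ≤ Lf * l1 (fun y => μ y - μ' y))
    (hLp : ∀ x a μ μ', IsProb μ → IsProb μ' →
      ∑ x', |p x a μ x' - p x a μ' x'| ≤ Lp * l1 (fun y => μ y - μ' y))
    (hLpc : Lp < (Fintype.card X : ℝ) * cmin)
    (φmax : ℝ)
    (hφmaxdef : φmax = ((Fintype.card X : ℝ) * cmin - Lp) / (Fintype.card A : ℝ)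
        * ((1 - γ) / (Lf + (γ / (1 - γ)) * Lp * fnorm)))
    (φ : ℝ) (hφ0 : 0 < φ) (hφmax : φ < φmax)
    -- the pair (μ̂, Q̂) solving the MFC fixed-point system
    (μhat : X → ℝ) (Qhat : X → A → ℝ) (hμhat : IsProb μhat)
    (hμhatfix : Ppush p (fun x' => argminE (Qhat x')) μhat μhat = μhat)
    (hQhatfix : bell f p γ μhat Qhat = Qhat)
    -- δ is (a positive lower bound for) the action gap of Q̂
    (δ : ℝ)
    (hgap : ∀ x a, minRow (Qhat x) < Qhat x a → minRow (Qhat x) + δ ≤ Qhat x a)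
    -- μ*_Q : the unique fixed point of μ ↦ P^{softmin_φ Q, μ} μ
    (mustar : (X → A → ℝ) → X → ℝ)
    (hmustar : ∀ Q : X → A → ℝ, IsProb (mustar Q) ∧
      Ppush p (fun x' => softmin φ (Q x')) (mustar Q) (mustar Q) = mustar Q)
    -- Q*φ : the unique fixed point of Q ↦ B_{μ*_Q} Q
    (Qstarφ : X → A → ℝ)
    (hQfix : bell f p γ (mustar Qstarφ) Qstarφ = Qstarφ) :
    l1 (fun x => mustar Qstarφ x - μhat x)
        ≤ 2 * Real.sqrt (Fintype.card A) * (1 - γ) * Real.exp (-φ * δ)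
            / ((Lf + (γ / (1 - γ)) * Lp * fnorm) * (φmax - φ))
    ∧ supQ (fun x a => Qstarφ x a - Qhat x a)
        ≤ 2 * Real.sqrt (Fintype.card A) * Real.exp (-φ * δ) / (φmax - φ) := by
  obtain ⟨hν, hνfix⟩ := hmustar Qstarφ
  have hprob : ∀ μ, IsProb μ → ∀ x a, IsProb (p x a μ) := fun μ hμ x a =>
    ⟨fun x' => hp0 x a μ x' hμ, hp1 x a μ hμ⟩
  have hQhat : supQ Qhat ≤ fnorm / (1 - γ) := supQ_le_of_bell_eq_self hγ0.le hγ1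
    (fun x a => hf x a μhat hμhat) (hprob μhat hμhat) hQhatfix
  have hQ := one_sub_mul_supQ_sub_le_of_bell_eq_self hγ0.le (hprob _ hν)
    (fun x a => hLf x a _ _ hν hμhat) (fun x a => hLp x a _ _ hν hμhat) hQfix hQhatfix hQhat
  have hpolicy : ∀ x, ∑ a, |softmin φ (Qstarφ x) a - argminE (Qhat x) a|
      ≤ Fintype.card A * φ * supQ (fun x a => Qstarφ x a - Qhat x a)
        + 2 * Fintype.card A * Real.exp (-φ * δ) := fun x =>
    sum_abs_softmin_sub_argminE_le_of_abs_sub_le hφ0.le (hgap x)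
      fun a => abs_le_supQ (fun x a => Qstarφ x a - Qhat x a) x a
  have hμ := mul_l1_sub_le_of_stationary (fun x => isProb_softmin φ (Qstarφ x)) hν hμhat
    (fun x a => hp1 x a _ hν) (fun x a x' => hcmin x a _ x' hν) (hprob μhat hμhat)
    (fun x a => hLp x a _ _ hν hμhat) hνfix hμhatfix hpolicy
  exact error_bounds_of_coupled_estimates (by exact_mod_cast Fintype.card_pos) (by linarith)
    hγ1 hφ0 hφmaxdef hφmax (Real.exp_pos _).le (l1_nonneg _) hμ hQ

/-- accuracy of the soft-min MFC fixed point: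
‖μ*_{Q*φ} − μ̂‖₁ ≤ 2√|𝒜|(1−γ)exp(−φδ)/((L_f + (γ/(1−γ))L_p‖f‖∞)(φ_max − φ)) and
‖Q*φ − Q̂‖∞ ≤ 2√|𝒜|exp(−φδ)/(φ_max − φ). -/
theorem mfc_accuracy [Fintype X] [Fintype A] [Nonempty X] [Nonempty A]
    (γ : ℝ) (hγ0 : 0 < γ) (hγ1 : γ < 1)
    (f : X → A → (X → ℝ) → ℝ) (fnorm : ℝ)
    (hf : ∀ x a μ, IsProb μ → |f x a μ| ≤ fnorm)
    (p : X → A → (X → ℝ) → X → ℝ)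
    (hp0 : ∀ x a μ x', IsProb μ → 0 ≤ p x a μ x')
    (hp1 : ∀ x a μ, IsProb μ → ∑ x', p x a μ x' = 1)
    (cmin Lf Lp : ℝ) (hcmin0 : 0 ≤ cmin)
    (hcmin : ∀ x a μ x', IsProb μ → cmin ≤ p x a μ x')
    (hLf0 : 0 ≤ Lf) (hLp0 : 0 ≤ Lp)
    (hLf : ∀ x a μ μ', IsProb μ → IsProb μ' →
      |f x a μ - f x a μ'| ≤ Lf * l1 (fun y => μ y - μ' y))
    (hLp : ∀ x a μ μ', IsProb μ → IsProb μ' →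
      ∑ x', |p x a μ x' - p x a μ' x'| ≤ Lp * l1 (fun y => μ y - μ' y))
    (hLpc : Lp < (Fintype.card X : ℝ) * cmin)
    (φmax : ℝ)
    (hφmaxdef : φmax = ((Fintype.card X : ℝ) * cmin - Lp) / (Fintype.card A : ℝ)
        * ((1 - γ) / (Lf + (γ / (1 - γ)) * Lp * fnorm)))
    (φ : ℝ) (hφ0 : 0 < φ) (hφmax : φ < φmax)
    -- the pair (μ̂, Q̂) solving the MFC fixed-point system
    (μhat : X → ℝ) (Qhat : X → A → ℝ) (hμhat : IsProb μhat)
    (hμhatfix : Ppush p (fun x' => argminE (Qhat x')) μhat μhat = μhat)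
    (hQhatfix : bell f p γ μhat Qhat = Qhat)
    -- δ is (a positive lower bound for) the action gap of Q̂
    (δ : ℝ) (hδ0 : 0 < δ)
    (hgap : ∀ x a, minRow (Qhat x) < Qhat x a → minRow (Qhat x) + δ ≤ Qhat x a)
    (hφδ : 0 < φmax - 1 / δ)
    -- μ*_Q : the unique fixed point of μ ↦ P^{softmin_φ Q, μ} μ
    (mustar : (X → A → ℝ) → X → ℝ)
    (hmustar : ∀ Q : X → A → ℝ, IsProb (mustar Q) ∧
      Ppush p (fun x' => softmin φ (Q x')) (mustar Q) (mustar Q) = mustar Q)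
    -- Q*φ : the unique fixed point of Q ↦ B_{μ*_Q} Q
    (Qstarφ : X → A → ℝ) (hQball : supQ Qstarφ ≤ fnorm / (1 - γ))
    (hQfix : bell f p γ (mustar Qstarφ) Qstarφ = Qstarφ) :
    l1 (fun x => mustar Qstarφ x - μhat x)
        ≤ 2 * Real.sqrt (Fintype.card A) * (1 - γ) * Real.exp (-φ * δ)
            / ((Lf + (γ / (1 - γ)) * Lp * fnorm) * (φmax - φ))
    ∧ supQ (fun x a => Qstarφ x a - Qhat x a)
        ≤ 2 * Real.sqrt (Fintype.card A) * Real.exp (-φ * δ) / (φmax - φ) :=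
  mfc_accuracy_general γ hγ0 hγ1 f fnorm hf p hp0 hp1 cmin Lf Lp hcmin hLf hLp hLpc φmax hφmaxdef φ
    hφ0 hφmax μhat Qhat hμhat hμhatfix hQhatfix δ hgap mustar hmustar Qstarφ hQfix
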